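/- Let n ≥ 3 be an integer and c > 0 a real number. Set α := max(n² c, e) and g' := (5α/(log α)²)^{1/(n−2)}. Then g' > 1 and (g'−1)² g'^{n−2} ≥ 2c; consequently g' is at least the solution g > 1 of (g−1)² g^{n−2} = 2c. -/
import Mathlib


open MeasureTheory Filter
open scoped Classical ENNReal

namespace RWHitting

/-- A weighted graph on a vertex set `V`: a symmetric weight function with
positive finite vertex weights. -/
structure WeightedGraph (V : Type*) where
  w : V → V → ℝ≥0∞
  symm : ∀ x y, w x y = w y x
  vw_pos : ∀ x, 0 < ∑' y, w x y
  vw_lt_top : ∀ x, ∑' y, w x y < ⊤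

namespace WeightedGraph

variable {V : Type*}

/-- The weight of a vertex. -/
noncomputable def vw (G : WeightedGraph V) (x : V) : ℝ≥0∞ := ∑' y, G.w x y

/-- The weight of a vertex set. -/
noncomputable def setWeight (G : WeightedGraph V) (z : Set V) : ℝ≥0∞ := ∑' x : z, G.vw x

/-- `G.distGE o z m` : every path of positive-weight steps from `o` into `z` has length `≥ m`. -/
def distGE (G : WeightedGraph V) (o : V) (z : Set V) (m : ℕ) : Prop :=
  ∀ (k : ℕ) (p : ℕ → V), p 0 = o → (∀ i, i < k → 0 < G.w (p i) (p (i+1))) → p k ∈ z → m ≤ k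

/-- Transition probabilities of the random walk on `G`. -/
noncomputable def trans (G : WeightedGraph V) (x y : V) : ℝ≥0∞ := G.w x y / G.vw x

/-- Graph distance (as an extended nonneg real). -/
noncomputable def edist (G : WeightedGraph V) (x y : V) : ℝ≥0∞ :=
  ⨅ (k : ℕ) (_ : ∃ p : ℕ → V, p 0 = x ∧ p k = y ∧ ∀ i, i < k → 0 < G.w (p i) (p (i+1))),
    (k : ℝ≥0∞)

/-- Total weight of the edges at distance `n` from `o` (each non-loop edge counted in both
orientations). -/
noncomputable def boundaryWeight (G : WeightedGraph V) (o : V) (n : ℕ) : ℝ≥0∞ :=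
  ∑' q : V × V, if min (G.edist o q.1) (G.edist o q.2) = (n : ℝ≥0∞) then G.w q.1 q.2 else 0

end WeightedGraph

variable {V : Type*}

/-- `μ` is the law of the random walk on `G` started at `o`. -/
def IsRandomWalk [MeasurableSpace V] (G : WeightedGraph V) (o : V)
    (μ : Measure (ℕ → V)) : Prop :=
  IsProbabilityMeasure μ ∧
  ∀ (k : ℕ) (x : Fin (k+1) → V),
    μ {ω | ∀ i : Fin (k+1), ω (i : ℕ) = x i}
      = (if x 0 = o then 1 else 0) * ∏ i : Fin k, G.trans (x i.castSucc) (x i.succ)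

/-- First hitting time of the set `z` (`∞` if `z` is never visited). -/
noncomputable def hitTime (z : Set V) (ω : ℕ → V) : ℝ≥0∞ :=
  ⨅ (k : ℕ) (_ : ω k ∈ z), (k : ℝ≥0∞)

/-- Expected hitting time of `z`. -/
noncomputable def expHit [MeasurableSpace V] (μ : Measure (ℕ → V)) (z : Set V) : ℝ≥0∞ :=
  ∫⁻ ω, hitTime z ω ∂μ

/-- Number of visits to `o` (counting time 0) strictly before hitting `z`. -/
noncomputable def visitsBefore (z : Set V) (o : V) (ω : ℕ → V) : ℝ≥0∞ :=
  ∑' k : ℕ, if ω k = o ∧ (k : ℝ≥0∞) < hitTime z ω then 1 else 0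

/-- Effective resistance between `o` and `z`, defined probabilistically via the random walk
law `μ`:  `w_o r_{oz}` is the expected number of visits to `o` before hitting `z`. -/
noncomputable def resistance [MeasurableSpace V] (G : WeightedGraph V) (o : V) (z : Set V)
    (μ : Measure (ℕ → V)) : ℝ≥0∞ :=
  (∫⁻ ω, visitsBefore z o ω ∂μ) / G.vw o

/-- One-step transition probabilities for the biased simple random walk on `ℤ`
with odds `1 : g` of going left/right. -/
noncomputable def biasedStep (g : ℝ) (a b : ℤ) : ℝ≥0∞ :=
  if b = a + 1 then ENNReal.ofReal (g / (g+1))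
  else if b = a - 1 then ENNReal.ofReal (1 / (g+1)) else 0

/-- `ν` is the law of the biased simple random walk on `ℤ` started at `0`,
stepping right with probability `g/(g+1)` and left with probability `1/(g+1)`. -/
def IsBiasedWalk (g : ℝ) (ν : Measure (ℕ → ℤ)) : Prop :=
  IsProbabilityMeasure ν ∧
  ∀ (k : ℕ) (x : Fin (k+1) → ℤ),
    ν {ω | ∀ i : Fin (k+1), ω (i : ℕ) = x i}
      = (if x 0 = 0 then 1 else 0) * ∏ i : Fin k, biasedStep g (x i.castSucc) (x i.succ)

/-- `e^{-λ t}` for an extended-real time `t`, with the convention `e^{-λ ∞} = 0`. -/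
noncomputable def expNeg (lam : ℝ) (t : ℝ≥0∞) : ℝ≥0∞ :=
  if t = ⊤ then 0 else ENNReal.ofReal (Real.exp (-lam * t.toReal))


set_option maxHeartbeats 1000000

/-- The explicit bound `g' = (5α/(log α)²)^{1/(n-2)}`, with
`α = max(n² c, e)`, satisfies `g' > 1`, `(g'-1)² g'^{n-2} ≥ 2c`, and hence dominates
every solution `g > 1` of `(g-1)² g^{n-2} = 2c`. -/
theorem explicit_bound_for_g
    (n : ℕ) (hn : 3 ≤ n) (c : ℝ) (hc : 0 < c)
    (α : ℝ) (hα : α = max ((n : ℝ) ^ 2 * c) (Real.exp 1))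
    (g' : ℝ) (hg' : g' = (5 * α / (Real.log α) ^ 2) ^ (1 / ((n : ℝ) - 2))) :
    1 < g' ∧ 2 * c ≤ (g' - 1) ^ 2 * g' ^ ((n : ℝ) - 2) ∧
      ∀ g : ℝ, 1 < g → (g - 1) ^ 2 * g ^ ((n : ℝ) - 2) = 2 * c → g ≤ g' := by
  have hn3 : (3:ℝ) ≤ (n:ℝ) := by exact_mod_cast hn
  have hm1 : (1:ℝ) ≤ (n:ℝ) - 2 := by linarith
  set m : ℝ := (n:ℝ) - 2 with hm
  have hm0 : (0:ℝ) < m := by linarith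
  have he : Real.exp 1 ≤ α := hα ▸ le_max_right _ _
  have hα0 : (0:ℝ) < α := lt_of_lt_of_le (Real.exp_pos 1) he
  have hcn : (n:ℝ)^2 * c ≤ α := hα ▸ le_max_left _ _
  set t := Real.log α with htdef
  have ht1 : (1:ℝ) ≤ t := by
    calc (1:ℝ) = Real.log (Real.exp 1) := (Real.log_exp 1).symm
    _ ≤ t := Real.log_le_log (Real.exp_pos 1) he
  have ht0 : (0:ℝ) < t := by linarith
  set β := 5 * α / t ^ 2 with hβ
  have hβ0 : (0:ℝ) < β := by positivity
  have hlogβ : Real.log β = Real.log 5 + t - 2 * Real.log t := by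
    rw [hβ, Real.log_div (by positivity) (by positivity),
      Real.log_mul (by norm_num) hα0.ne', Real.log_pow]
    push_cast; ring
  have hlog5 : (3/2 : ℝ) ≤ Real.log 5 := by
    rw [Real.le_log_iff_exp_le (by norm_num)]
    have h9 : Real.exp 1 < 2.7182818286 := Real.exp_one_lt_d9
    have hsq : Real.exp (3/2) * Real.exp (3/2) = Real.exp 1 ^ 3 := by
      rw [← Real.exp_add, ← Real.exp_nat_mul]; norm_num
    have h3 : Real.exp 1 ^ 3 < 25 := by nlinarith [Real.exp_pos 1, sq_nonneg (Real.exp 1)]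
    nlinarith [Real.exp_pos (3/2:ℝ)]
  have hlogdiv : ∀ x : ℝ, 0 < x → Real.log x ≤ x / Real.exp 1 := by
    intro x hx
    have h := Real.log_le_sub_one_of_pos (show (0:ℝ) < x / Real.exp 1 by positivity)
    rw [Real.log_div hx.ne' (Real.exp_ne_zero 1), Real.log_exp] at h
    linarith
  -- key: 2 log t ≤ 11/30 t + 3/2
  have hkey : 2 * Real.log t ≤ 11/30 * t + 3/2 := by
    set s := Real.sqrt t with hs
    have hs2 : s ^ 2 = t := Real.sq_sqrt ht0.le
    have hs1 : (1:ℝ) ≤ s := by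
      rw [hs, show (1:ℝ) = Real.sqrt 1 by simp]
      exact Real.sqrt_le_sqrt ht1
    have hls : Real.log t = 2 * Real.log s := by
      rw [← hs2, Real.log_pow]; push_cast; ring
    have h1 : Real.log s ≤ s / Real.exp 1 := hlogdiv s (by linarith)
    have h9 : Real.exp 1 > 2.7182818283 := Real.exp_one_gt_d9
    have h2 : s / Real.exp 1 ≤ 0.37 * s := by
      rw [div_le_iff₀ (Real.exp_pos 1)]
      nlinarith
    nlinarith [sq_nonneg (55*s - 111)]
  have hlogβ2 : 19/30 * t ≤ Real.log β := by rw [hlogβ]; linarith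
  have hβ1 : (1:ℝ) < β := by
    have h0 : (0:ℝ) < Real.log β := by linarith
    have := Real.exp_lt_exp.mpr h0
    rwa [Real.exp_zero, Real.exp_log hβ0] at this
  have hg'β : g' = β ^ (1/m) := by rw [hg']
  have hg'1 : 1 < g' := by
    rw [hg'β]
    exact Real.one_lt_rpow_iff_of_pos hβ0 |>.mpr (Or.inl ⟨hβ1, by positivity⟩)
  have hg'0 : (0:ℝ) < g' := by linarith
  have hg'm : g' ^ m = β := by
    rw [hg'β, ← Real.rpow_mul hβ0.le, one_div_mul_cancel hm0.ne', Real.rpow_one]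
  -- g' - 1 ≥ log g'
  have hge : Real.log g' ≤ g' - 1 := by
    have h := Real.add_one_le_exp (Real.log g')
    rw [Real.exp_log hg'0] at h
    linarith
  have hlg' : 19/30 * t / n ≤ Real.log g' := by
    rw [hg'β, Real.log_rpow hβ0]
    have hmn : m ≤ (n:ℝ) := by rw [hm]; linarith
    have hn0 : (0:ℝ) < n := by linarith
    calc 19/30 * t / n ≤ 19/30 * t / m := by
          apply div_le_div_of_nonneg_left (by positivity) hm0 hmn
      _ ≤ 1/m * Real.log β := by
          rw [div_eq_mul_inv, one_div, mul_comm (m⁻¹)]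
          exact mul_le_mul_of_nonneg_right hlogβ2 (by positivity)
  have hn0 : (0:ℝ) < n := by linarith
  have hL0 : (0:ℝ) ≤ 19/30 * t / n := by positivity
  have hsq : (19/30 * t / n)^2 ≤ (g' - 1)^2 := by
    apply pow_le_pow_left₀ hL0 (by linarith) 2
  have hβt : β * t^2 = 5 * α := by rw [hβ]; field_simp
  have hmain : 2 * c ≤ (g' - 1)^2 * β := by
    have h1 : (19/30 * t / n)^2 * β = 361/180 * (α / n^2) := by
      rw [hβ]; field_simp; ring
    have h2 : c ≤ α / n^2 := by
      rw [le_div_iff₀ (by positivity)]; linarith [hcn]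
    have h3 : (19/30 * t / n)^2 * β ≤ (g' - 1)^2 * β :=
      mul_le_mul_of_nonneg_right hsq hβ0.le
    nlinarith [h1, h2, h3]
  refine ⟨hg'1, by rw [← hg'm] at hmain; exact hmain, ?_⟩
  intro g hg1 hgeq
  by_contra hgg
  push_neg at hgg
  have h1 : (g' - 1)^2 < (g - 1)^2 := by nlinarith
  have h2 : g' ^ m < g ^ m := Real.rpow_lt_rpow hg'0.le hgg hm0
  have h3 : (g' - 1)^2 * g' ^ m < (g - 1)^2 * g ^ m :=
    mul_lt_mul'' h1 h2 (sq_nonneg _) (Real.rpow_nonneg hg'0.le m)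
  rw [hg'm] at h3
  rw [show (g:ℝ) ^ ((n:ℝ) - 2) = g ^ m from rfl] at hgeq
  linarith [hmain]

end RWHitting
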